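/- arXiv:2211.13151 — 4 statements merged into one kernel-verified Lean document; each statement's English description precedes it below -/
import Mathlib

section
/- Let A = ⊕_{i=0}^n A_i be a graded commutative ring and suppose x ∈ A_k and y ∈ A_l induce periodicity (in the sense that multiplication by the element is injective A_i → A_{i+deg} for 0 < i ≤ n−deg and surjective for 0 ≤ i < n−deg), with k, l ≤ n/2. Then there exists an element of degree gcd(k, l) that induces periodicity. -/
/-!
Euclid's algorithm on degrees. If `x ∈ A_k` and `y ∈ A_l` induce periodicity with `l < k`,
surjectivity of `y` onto degree `k` writes `x = y * z` with `z ∈ A_{k-l}`, and `z` inherits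
injectivity and surjectivity from `x` and `y`. Iterating gives an element of degree `k % l`
(the unit `1 ∈ A_0` when `l ∣ k`), and Euclid's algorithm ends in degree `gcd k l`.
-/

/-- An element `x ∈ 𝒜 k` of a graded commutative ring (graded by degrees `0, …, n`)
induces periodicity: `k ≤ n/2`, multiplication by `x` is injective `A_i → A_{i+k}` for
`0 < i ≤ n - k` and surjective for `0 ≤ i < n - k`. -/
def InducesPeriodicity {A : Type*} [CommRing A] (𝒜 : ℕ → AddSubgroup A)
    (n k : ℕ) (x : A) : Prop :=
  x ∈ 𝒜 k ∧ 2 * k ≤ n ∧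
    (∀ i, 0 < i → i + k ≤ n → ∀ u ∈ 𝒜 i, ∀ v ∈ 𝒜 i, x * u = x * v → u = v) ∧
    (∀ i, i + k < n → ∀ c ∈ 𝒜 (i + k), ∃ u ∈ 𝒜 i, x * u = c)

theorem SetLike.mul_mem_graded_of_add_eq {ι R S : Type*} [SetLike S R] [Mul R] [Add ι]
    {𝒜 : ι → S} [SetLike.GradedMul 𝒜] {i j m : ι} {u v : R} (hu : u ∈ 𝒜 i)
    (hv : v ∈ 𝒜 j) (h : i + j = m) : u * v ∈ 𝒜 m :=
  h ▸ SetLike.mul_mem_graded hu hv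

namespace InducesPeriodicity

open SetLike

variable {A : Type*} [CommRing A] {𝒜 : ℕ → AddSubgroup A} {n k l : ℕ} {x y z : A}

theorem one [SetLike.GradedOne 𝒜] : InducesPeriodicity 𝒜 n 0 1 :=
  ⟨SetLike.one_mem_graded 𝒜, by omega, fun _ _ _ u _ v _ h => by simpa using h,
    fun _ _ c hc => ⟨c, hc, one_mul c⟩⟩

theorem of_eq_mul [SetLike.GradedMul 𝒜] (hx : InducesPeriodicity 𝒜 n k x)
    (hy : InducesPeriodicity 𝒜 n l y) (hz : z ∈ 𝒜 (k - l)) (hlk : l < k)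
    (hxyz : x = y * z) :
    InducesPeriodicity 𝒜 n (k - l) z := by
  obtain ⟨-, hkn, hx_inj, hx_surj⟩ := hx
  obtain ⟨hyl, -, hy_inj, hy_surj⟩ := hy
  have hx_mul (u : A) : x * u = y * (z * u) := by rw [hxyz, mul_assoc]
  refine ⟨hz, by omega, ?_, ?_⟩
  · intro i hi hin u hu v hv huv
    by_cases hik : i + k ≤ n
    · exact hx_inj i hi hik u hu v hv (by rw [hx_mul, hx_mul, huv])
    · -- past the range of `x`, divide `u` and `v` by `y` first
      have hsub : i - l + l = i := by omega
      obtain ⟨u', hu', rfl⟩ := hy_surj (i - l) (by omega) u (hsub.symm ▸ hu)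
      obtain ⟨v', hv', rfl⟩ := hy_surj (i - l) (by omega) v (hsub.symm ▸ hv)
      have hxuv : x * u' = x * v' := by
        rw [hxyz, mul_comm y, mul_assoc, mul_assoc, huv]
      rw [hx_inj (i - l) (by omega) (by omega) u' hu' v' hv' hxuv]
  · intro i hin c hc
    by_cases hli : l ≤ i
    · obtain ⟨u, hu, rfl⟩ :=
        hx_surj (i - l) (by omega) c (by rwa [show i - l + k = i + (k - l) by omega])
      exact ⟨y * u, mul_mem_graded_of_add_eq hyl hu (by omega), by rw [hx_mul, mul_left_comm]⟩
    · -- too low for `x` to reach `c` directly: reach `y * c` and cancel `y`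
      obtain ⟨u, hu, hxu⟩ :=
        hx_surj i (by omega) (y * c) (mul_mem_graded_of_add_eq hyl hc (by omega))
      refine ⟨u, hu, hy_inj (i + (k - l)) (by omega) (by omega) _
        (mul_mem_graded_of_add_eq hz hu (by omega)) c hc ?_⟩
      rw [← hx_mul, hxu]

theorem exists_sub [SetLike.GradedMul 𝒜] (hx : InducesPeriodicity 𝒜 n k x)
    (hy : InducesPeriodicity 𝒜 n l y) (hlk : l < k) :
    ∃ z, InducesPeriodicity 𝒜 n (k - l) z := by
  obtain ⟨z, hz, hyz⟩ :=
    hy.2.2.2 (k - l) (by have := hx.2.1; omega) x (by rw [Nat.sub_add_cancel hlk.le]; exact hx.1)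
  exact ⟨z, hx.of_eq_mul hy hz hlk hyz.symm⟩

theorem exists_mod [SetLike.GradedMonoid 𝒜] (hx : InducesPeriodicity 𝒜 n k x)
    (hy : InducesPeriodicity 𝒜 n l y) (hl : 0 < l) :
    ∃ z, InducesPeriodicity 𝒜 n (k % l) z := by
  induction k using Nat.strong_induction_on generalizing x with
  | _ k ih =>
    rcases lt_trichotomy k l with hkl | rfl | hlk
    · exact ⟨x, by rwa [Nat.mod_eq_of_lt hkl]⟩
    · exact ⟨1, by rw [Nat.mod_self]; exact one⟩
    · obtain ⟨z, hz⟩ := hx.exists_sub hy hlk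
      rw [Nat.mod_eq_sub_mod hlk.le]
      exact ih (k - l) (by omega) hz

theorem exists_gcd [SetLike.GradedMonoid 𝒜] (hx : InducesPeriodicity 𝒜 n k x)
    (hy : InducesPeriodicity 𝒜 n l y) : ∃ w, InducesPeriodicity 𝒜 n (Nat.gcd k l) w := by
  induction k, l using Nat.gcd.induction generalizing x y with
  | H0 l => exact ⟨y, by rwa [Nat.gcd_zero_left]⟩
  | H1 k l hk ih =>
    obtain ⟨z, hz⟩ := hy.exists_mod hx hk
    rw [Nat.gcd_rec]
    exact ih hz hx

end InducesPeriodicity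

theorem stmt1_general {A : Type*} [CommRing A] (𝒜 : ℕ → AddSubgroup A) [GradedRing 𝒜]
    (n : ℕ)
    (k l : ℕ) (x y : A)
    (hx : InducesPeriodicity 𝒜 n k x) (hy : InducesPeriodicity 𝒜 n l y) :
    ∃ w : A, InducesPeriodicity 𝒜 n (Nat.gcd k l) w :=
  hx.exists_gcd hy

/-- if `x ∈ A_k` and `y ∈ A_l` induce periodicity, there is an element of
degree `gcd(k, l)` inducing periodicity. -/
theorem stmt1 {A : Type*} [CommRing A] (𝒜 : ℕ → AddSubgroup A) [GradedRing 𝒜]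
    (n : ℕ) (htop : ∀ i, n < i → 𝒜 i = ⊥)
    (k l : ℕ) (x y : A)
    (hx : InducesPeriodicity 𝒜 n k x) (hy : InducesPeriodicity 𝒜 n l y) :
    ∃ w : A, InducesPeriodicity 𝒜 n (Nat.gcd k l) w :=
  stmt1_general 𝒜 n k l x y hx hy
end

section
/- Let p be a prime, l ≥ 0, and let k_1, …, k_s be natural numbers with sum r. If p^l divides r but p^l does not divide k_j for some j, then the multinomial coefficient r! / (k_1! ⋯ k_s!) is divisible by p. -/
/-!
Splitting off the part `k_j` writes the multinomial coefficient as `C(r, k_j)` times the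
multinomial coefficient of the remaining parts, so it is enough that `p ∣ C(r, a)` whenever
`p^l ∣ r` and `p^l ∤ a`. Since `a * C(r, a) = r * C(r - 1, a - 1)`, the number `r` divides
`a * C(r, a)`; if `p ∤ C(r, a)`, then `p^l` is coprime to `C(r, a)` and so divides `a`.
-/

namespace Nat

theorem dvd_mul_choose (n k : ℕ) : n ∣ k * n.choose k := by
  rcases k with _ | k
  · simp
  rcases n with _ | n
  · simp
  exact ⟨n.choose k, by rw [mul_comm, ← add_one_mul_choose_eq]⟩

theorem Prime.dvd_choose_of_pow_dvd_of_not_pow_dvd {p l n k : ℕ} (hp : p.Prime)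
    (hn : p ^ l ∣ n) (hk : ¬ p ^ l ∣ k) : p ∣ n.choose k := by
  by_contra hpC
  have hcop : Coprime (p ^ l) (n.choose k) := ((hp.coprime_iff_not_dvd).2 hpC).pow_left l
  exact hk (hcop.dvd_of_dvd_mul_right (hn.trans (dvd_mul_choose n k)))

theorem Prime.dvd_multinomial_of_pow_dvd_sum_of_not_pow_dvd {α : Type*} {s : Finset α}
    {f : α → ℕ} {p l : ℕ} {a : α} (hp : p.Prime) (hsum : p ^ l ∣ ∑ i ∈ s, f i) (ha : a ∈ s)
    (hfa : ¬ p ^ l ∣ f a) : p ∣ multinomial s f := by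
  classical
  rw [← Finset.insert_erase ha, multinomial_insert (Finset.notMem_erase a s),
    Finset.add_sum_erase s f ha]
  exact (hp.dvd_choose_of_pow_dvd_of_not_pow_dvd hsum hfa).mul_right _

end Nat

/-- if `p^l` divides `r = ∑ k_i` but not some `k_j`, then `p` divides the
multinomial coefficient `r! / (k_1! ⋯ k_s!)`. -/
theorem stmt7 (p : ℕ) (hp : p.Prime) (l : ℕ) {s : ℕ} (k : Fin s → ℕ)
    (hr : p ^ l ∣ ∑ i, k i) (j : Fin s) (hj : ¬ p ^ l ∣ k j) :
    p ∣ Nat.multinomial Finset.univ k :=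
  hp.dvd_multinomial_of_pow_dvd_sum_of_not_pow_dvd hr (Finset.mem_univ j) hj
end

section
/- Let p be a prime, l ≥ 0 and 1 ≤ λ ≤ p−1. Then the multinomial coefficient (λ p^l)! / ((p^l)!)^λ is congruent to λ! modulo p. In particular it is nonzero modulo p. -/
/-!
By Lucas' theorem, peeling off one base-`p` digit at a time,
`(m p^l).choose (p^l) ≡ m.choose 1 = m [MOD p]`. Splitting the multinomial coefficient into a
product of binomial coefficients, `(λ p^l)! / ((p^l)!)^λ = ∏_{j=1}^{λ} (j p^l).choose (p^l)`,
so it is congruent to `λ!`, which is prime to `p` when `λ < p`.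
-/

open Finset

namespace Nat

variable {p : ℕ} [Fact p.Prime]

theorem choose_mul_prime_pow_modEq (m l : ℕ) :
    (m * p ^ l).choose (p ^ l) ≡ m [MOD p] := by
  induction l with
  | zero => simp [Nat.ModEq.refl]
  | succ l ih =>
    have hp : 0 < p := (Fact.out : p.Prime).pos
    have hn : m * p ^ (l + 1) = m * p ^ l * p := by ring
    refine (Choose.choose_modEq_choose_mod_mul_choose_div_nat).trans ?_
    rw [hn, pow_succ, Nat.mul_mod_left, Nat.mul_mod_left, Nat.mul_div_cancel _ hp,
      Nat.mul_div_cancel _ hp, choose_zero_right, one_mul]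
    exact ih

theorem multinomial_const_prime_pow_modEq {α : Type*} (s : Finset α) (l : ℕ) :
    multinomial s (fun _ => p ^ l) ≡ (#s)! [MOD p] := by
  classical
  induction s using Finset.induction_on with
  | empty => simp [Nat.ModEq.refl]
  | insert a s ha ih =>
    have hsum : p ^ l + ∑ _ ∈ s, p ^ l = (#s + 1) * p ^ l := by rw [sum_const, smul_eq_mul]; ring
    rw [multinomial_insert ha, card_insert_of_notMem ha, factorial_succ, hsum]
    exact (choose_mul_prime_pow_modEq _ l).mul ih

end Nat

theorem stmt8_general (p : ℕ) (hp : p.Prime) (l lam : ℕ) (h2 : lam ≤ p - 1) :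
    Nat.multinomial Finset.univ (fun _ : Fin lam => p ^ l) ≡ Nat.factorial lam [MOD p] ∧
    ¬ p ∣ Nat.multinomial Finset.univ (fun _ : Fin lam => p ^ l) := by
  have : Fact p.Prime := ⟨hp⟩
  have hmod : Nat.multinomial Finset.univ (fun _ : Fin lam => p ^ l) ≡ lam.factorial [MOD p] := by
    simpa using Nat.multinomial_const_prime_pow_modEq (Finset.univ : Finset (Fin lam)) l
  refine ⟨hmod, fun hdvd => ?_⟩
  have hle : p ≤ lam := hp.dvd_factorial.mp ((hmod.dvd_iff dvd_rfl).mp hdvd)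
  have := hp.two_le
  omega

/-- for a prime `p`, `l ≥ 0` and `1 ≤ λ ≤ p − 1`, the multinomial
coefficient `(λ p^l)! / ((p^l)!)^λ` is congruent to `λ!` mod `p`; in particular it is
nonzero mod `p`. -/
theorem stmt8 (p : ℕ) (hp : p.Prime) (l lam : ℕ) (h1 : 1 ≤ lam) (h2 : lam ≤ p - 1) :
    Nat.multinomial Finset.univ (fun _ : Fin lam => p ^ l) ≡ Nat.factorial lam [MOD p] ∧
    ¬ p ∣ Nat.multinomial Finset.univ (fun _ : Fin lam => p ^ l) :=
  stmt8_general p hp l lam h2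
end

section
/- Every finite set of points in the real affine plane, not all collinear, determines an ordinary line, i.e. a line passing through exactly two of the points (Sylvester–Gallai theorem). -/
/-!
Kelly's proof. Among all pairs of a line `pq` through two points of `S` and a point `r ∈ S` off
it, take one with `r` nearest to `pq`. If `pq` contained a third point of `S`, two of the three
points on `pq`, say `a` and `b` with `a` the nearer one, would lie on the same side of the foot of
the perpendicular from `r`. The angle at `a` of the triangle `rab` is then not acute, so `rb` is its
longest side, and `a` is nearer to the line `rb` than `r` is to the line `ab = pq`.
-/

open AffineMap

namespace SylvesterGallai

/-- Twice the signed area of the triangle `pqr`. -/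
def cross (p q r : ℝ × ℝ) : ℝ :=
  (q.1 - p.1) * (r.2 - p.2) - (q.2 - p.2) * (r.1 - p.1)

def dot (p q r : ℝ × ℝ) : ℝ :=
  (q.1 - p.1) * (r.1 - p.1) + (q.2 - p.2) * (r.2 - p.2)

def sqDist (p q : ℝ × ℝ) : ℝ :=
  (q.1 - p.1) ^ 2 + (q.2 - p.2) ^ 2

/-- The squared Euclidean distance from `r` to the line `pq`. -/
noncomputable def lineSqDist (p q r : ℝ × ℝ) : ℝ :=
  cross p q r ^ 2 / sqDist p q

lemma sub_fst_ne_zero_or_sub_snd_ne_zero {p q : ℝ × ℝ} (h : p ≠ q) :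
    q.1 - p.1 ≠ 0 ∨ q.2 - p.2 ≠ 0 := by
  contrapose! h
  exact Prod.ext (by linarith) (by linarith)

lemma sqDist_pos {p q : ℝ × ℝ} (h : p ≠ q) : 0 < sqDist p q := by
  unfold sqDist
  rcases sub_fst_ne_zero_or_sub_snd_ne_zero h with h | h <;> positivity

lemma ne_of_cross_ne_zero {p q r : ℝ × ℝ} (h : cross p q r ≠ 0) : p ≠ q := by
  rintro rfl
  exact h (by unfold cross; ring)

lemma cross_swap (p q r : ℝ × ℝ) : cross r q p = -cross p q r := by
  unfold cross; ring

lemma cross_lineMap (p q r : ℝ × ℝ) (α β : ℝ) :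
    cross (lineMap p q α) (lineMap p q β) r = (β - α) * cross p q r := by
  simp only [cross, fst_lineMap, snd_lineMap, lineMap_apply_ring']; ring

lemma sqDist_lineMap (p q : ℝ × ℝ) (α β : ℝ) :
    sqDist (lineMap p q α) (lineMap p q β) = (β - α) ^ 2 * sqDist p q := by
  simp only [sqDist, fst_lineMap, snd_lineMap, lineMap_apply_ring']; ring

lemma dot_lineMap (p q r : ℝ × ℝ) (α β : ℝ) :
    dot (lineMap p q α) r (lineMap p q β) = (β - α) * (dot p q r - α * sqDist p q) := by
  simp only [dot, sqDist, fst_lineMap, snd_lineMap, lineMap_apply_ring']; ring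

lemma lineSqDist_lineMap (p q r : ℝ × ℝ) {α β : ℝ} (h : α ≠ β) :
    lineSqDist (lineMap p q α) (lineMap p q β) r = lineSqDist p q r := by
  rw [lineSqDist, lineSqDist, cross_lineMap, sqDist_lineMap, mul_pow,
    mul_div_mul_left _ _ (pow_ne_zero 2 (sub_ne_zero.2 h.symm))]

lemma exists_eq_lineMap_of_cross_eq_zero {p q r : ℝ × ℝ} (hpq : p ≠ q)
    (h : cross p q r = 0) : ∃ c : ℝ, r = lineMap p q c := by
  unfold cross at h
  rcases sub_fst_ne_zero_or_sub_snd_ne_zero hpq with h₁ | h₂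
  · refine ⟨(r.1 - p.1) / (q.1 - p.1), Prod.ext ?_ ?_⟩ <;>
      simp only [fst_lineMap, snd_lineMap, lineMap_apply_ring'] <;> field_simp <;> linarith
  · refine ⟨(r.2 - p.2) / (q.2 - p.2), Prod.ext ?_ ?_⟩ <;>
      simp only [fst_lineMap, snd_lineMap, lineMap_apply_ring'] <;> field_simp <;> linarith

lemma collinear_iff_forall_cross_eq_zero (s : Set (ℝ × ℝ)) :
    Collinear ℝ s ↔ ∀ p ∈ s, ∀ q ∈ s, ∀ r ∈ s, cross p q r = 0 := by
  constructor
  · rw [collinear_iff_exists_forall_eq_smul_vadd]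
    rintro ⟨p₀, v, hv⟩ p hp q hq r hr
    obtain ⟨a, rfl⟩ := hv p hp
    obtain ⟨b, rfl⟩ := hv q hq
    obtain ⟨c, rfl⟩ := hv r hr
    simp only [cross, vadd_eq_add, Prod.fst_add, Prod.snd_add, Prod.smul_fst, Prod.smul_snd,
      smul_eq_mul]
    ring
  · intro h
    rcases s.eq_empty_or_nonempty with rfl | ⟨p, hp⟩
    · exact collinear_empty ℝ _
    by_cases hs : s ⊆ {p}
    · exact (collinear_singleton ℝ p).subset hs
    obtain ⟨q, hq, hqp⟩ := Set.not_subset.1 hs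
    rw [collinear_iff_of_mem hp]
    refine ⟨q -ᵥ p, fun r hr => ?_⟩
    obtain ⟨c, rfl⟩ := exists_eq_lineMap_of_cross_eq_zero (Ne.symm hqp) (h p hp q hq r hr)
    exact ⟨c, lineMap_apply p q c⟩

lemma exists_mem_between_of_same_side {T : Set ℝ} {t a b : ℝ} (ha : a ∈ T) (hb : b ∈ T)
    (hab : a ≠ b) (h : 0 ≤ (a - t) * (b - t)) :
    ∃ α ∈ T, ∃ β ∈ T, α ≠ β ∧ 0 ≤ (β - α) * (α - t) := by
  by_cases h' : 0 ≤ (b - a) * (a - t)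
  · exact ⟨a, ha, b, hb, hab, h'⟩
  · exact ⟨b, hb, a, ha, hab.symm, by nlinarith⟩

lemma exists_mem_between_of_three (t : ℝ) {x y z : ℝ} (hxy : x ≠ y) (hxz : x ≠ z)
    (hyz : y ≠ z) : ∃ α ∈ ({x, y, z} : Set ℝ), ∃ β ∈ ({x, y, z} : Set ℝ),
      α ≠ β ∧ 0 ≤ (β - α) * (α - t) := by
  obtain h | h | h :
      0 ≤ (x - t) * (y - t) ∨ 0 ≤ (x - t) * (z - t) ∨ 0 ≤ (y - t) * (z - t) := by
    by_contra! h
    nlinarith [mul_pos_of_neg_of_neg h.1 h.2.1, sq_nonneg ((x - t) * (y - t) * (z - t))]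
  · exact exists_mem_between_of_same_side (by simp) (by simp) hxy h
  · exact exists_mem_between_of_same_side (by simp) (by simp) hxz h
  · exact exists_mem_between_of_same_side (by simp) (by simp) hyz h

lemma lineSqDist_lt_of_dot_nonpos {a b r : ℝ × ℝ} (h : cross a b r ≠ 0)
    (hobtuse : dot a r b ≤ 0) : lineSqDist r b a < lineSqDist a b r := by
  have hra : r ≠ a := by
    rintro rfl
    exact h (by unfold cross; ring)
  have hlt : sqDist a b < sqDist r b := by
    have : sqDist r b = sqDist a r + sqDist a b - 2 * dot a r b := by
      unfold sqDist dot; ring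
    linarith [sqDist_pos hra.symm]
  rw [lineSqDist, lineSqDist, cross_swap, neg_sq]
  exact div_lt_div_of_pos_left (by positivity) (sqDist_pos (ne_of_cross_ne_zero h)) hlt

lemma exists_lineSqDist_lt {p q r s : ℝ × ℝ} (hr : cross p q r ≠ 0) (hs : cross p q s = 0)
    (hsp : s ≠ p) (hsq : s ≠ q) :
    ∃ a ∈ ({p, q, s} : Set (ℝ × ℝ)), ∃ b ∈ ({p, q, s} : Set (ℝ × ℝ)),
      cross r b a ≠ 0 ∧ lineSqDist r b a < lineSqDist p q r := by
  have hpq := ne_of_cross_ne_zero hr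
  obtain ⟨u, rfl⟩ := exists_eq_lineMap_of_cross_eq_zero hpq hs
  have hu0 : u ≠ 0 := by rintro rfl; exact hsp (lineMap_apply_zero p q)
  have hu1 : u ≠ 1 := by rintro rfl; exact hsq (lineMap_apply_one p q)
  -- `lineMap p q t` is the foot of the perpendicular from `r`
  set t := dot p q r / sqDist p q
  obtain ⟨α, hα, β, hβ, hαβ, hle⟩ :=
    exists_mem_between_of_three t zero_ne_one hu0.symm hu1.symm
  have hmem : ∀ γ ∈ ({0, 1, u} : Set ℝ),
      lineMap p q γ ∈ ({p, q, lineMap p q u} : Set (ℝ × ℝ)) := by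
    rintro γ (rfl | rfl | rfl) <;> simp
  have hcross : cross (lineMap p q α) (lineMap p q β) r ≠ 0 := by
    rw [cross_lineMap]
    exact mul_ne_zero (sub_ne_zero.2 hαβ.symm) hr
  have hdot : dot (lineMap p q α) r (lineMap p q β) ≤ 0 := by
    have hM := sqDist_pos hpq
    have : dot p q r - α * sqDist p q = -((α - t) * sqDist p q) := by
      simp only [t]; field_simp; ring
    rw [dot_lineMap, this, mul_neg, ← mul_assoc, neg_nonpos]
    exact mul_nonneg hle hM.le
  refine ⟨_, hmem α hα, _, hmem β hβ, by rw [cross_swap]; exact neg_ne_zero.2 hcross, ?_⟩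
  calc lineSqDist r (lineMap p q β) (lineMap p q α)
      < lineSqDist (lineMap p q α) (lineMap p q β) r := lineSqDist_lt_of_dot_nonpos hcross hdot
    _ = lineSqDist p q r := lineSqDist_lineMap p q r hαβ

end SylvesterGallai

open SylvesterGallai in
/-- Sylvester–Gallai: a finite set of points in the real plane, not all
collinear, has an ordinary line: two points of the set such that any point of the set
collinear with them is one of the two. -/
theorem stmt12 (S : Finset (ℝ × ℝ)) (h : ¬ Collinear ℝ (S : Set (ℝ × ℝ))) :
    ∃ p ∈ S, ∃ q ∈ S, p ≠ q ∧
      ∀ r ∈ S, Collinear ℝ ({p, q, r} : Set (ℝ × ℝ)) → r = p ∨ r = q := by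
  classical
  set T := (S ×ˢ S ×ˢ S).filter fun m => cross m.1 m.2.1 m.2.2 ≠ 0
  have hT : T.Nonempty := by
    contrapose! h
    rw [collinear_iff_forall_cross_eq_zero]
    intro p hp q hq r hr
    by_contra hpqr
    simp_all [T]
  obtain ⟨⟨p, q, r⟩, hm, hmin⟩ :=
    T.exists_min_image (fun m => lineSqDist m.1 m.2.1 m.2.2) hT
  simp only [T, Finset.mem_filter, Finset.mem_product] at hm
  obtain ⟨⟨hp, hq, hr⟩, hpqr⟩ := hm
  refine ⟨p, hp, q, hq, ne_of_cross_ne_zero hpqr, fun s hs hcol => ?_⟩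
  by_contra! hsp
  have hs0 := (collinear_iff_forall_cross_eq_zero _).1 hcol p (by simp) q (by simp) s (by simp)
  obtain ⟨a, ha, b, hb, hrba, hlt⟩ := exists_lineSqDist_lt hpqr hs0 hsp.1 hsp.2
  have hsub : ∀ x ∈ ({p, q, s} : Set (ℝ × ℝ)), x ∈ S := by
    rintro x (rfl | rfl | rfl) <;> assumption
  exact (hmin (r, b, a) (by simp [T, hr, hsub a ha, hsub b hb, hrba])).not_gt hlt
end
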